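/- Under the stated payoff structure for LC-Game, if t > R_C − c_T and t > ((n−1)/n)·(α_i·S·φ(α_i) + φ(α_i)·R_B + R_C − c_T) hold for all i, then the all-obey profile in LC-Game is a Nash equilibrium, and moreover the payoff each colluder receives under all-obey (φ(α_i)·R_B) strictly exceeds their payoff in the all-diligent equilibrium of PoD-Game (φ(α_i)·R_B − c_T). -/
import Mathlib


/-- Under the LC-Game payoff structure, if `t > R_C - c_T` and
`t > ((n-1)/n)·(α_i·S·φ(α_i) + φ(α_i)·R_B + R_C - c_T)` for all `i`, then the
all-obey profile (`true` = obey, `false` = betray) is a Nash equilibrium, and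
each colluder's all-obey payoff `φ(α_i)·R_B` strictly exceeds their payoff
`φ(α_i)·R_B - c_T` in the all-diligent equilibrium of PoD-Game. -/
theorem lc_all_obey_nash_and_pareto
    (n : ℕ) (hn : 1 ≤ n)
    (α φ : Fin n → ℝ) (S cT RB RC t : ℝ)
    (hα : ∀ i, 0 < α i) (hS : 0 < S) (hcT : 0 < cT) (hRB : 0 < RB)
    (hRC : 0 < RC) (ht0 : 0 < t)
    (hφ : ∀ i, φ i ∈ Set.Ioo (0 : ℝ) 1)
    (ht1 : t > RC - cT)
    (ht2 : ∀ i, t > (((n : ℝ) - 1) / n) * (α i * S * φ i + φ i * RB + RC - cT))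
    (u : Fin n → (Fin n → Bool) → ℝ)
    (hu : ∀ i s, u i s =
      (if s i then
        (if (Finset.univ.filter (fun j => s j)).card < n
          then -(α i * S * φ i) +
            ((n : ℝ) - (Finset.univ.filter (fun j => s j)).card) * t /
              (Finset.univ.filter (fun j => s j)).card
          else φ i * RB)
       else
        (if (Finset.univ.filter (fun j => s j)).card = 0
          then φ i * RB - cT
          else φ i * RB + RC - cT - t))) :
    (∀ i : Fin n, ∀ a : Bool,
        u i (Function.update (fun _ => true) i a) ≤ u i (fun _ => true)) ∧
    (∀ i : Fin n, φ i * RB > φ i * RB - cT) := by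
  have hall : ∀ i : Fin n, u i (fun _ => true) = φ i * RB := by
    intro i
    rw [hu]
    simp
  constructor
  · intro i a
    rw [hall]
    cases a with
    | true =>
      have : Function.update (fun _ : Fin n => true) i true = fun _ => true := by
        funext j
        by_cases h : j = i <;> simp [Function.update, h]
      rw [this, hall]
    | false =>
      rw [hu]
      have hsi : Function.update (fun _ : Fin n => true) i false i = false := by
        simp
      rw [hsi]
      simp only [Bool.false_eq_true, if_false]
      have hfilt : (Finset.univ.filter
          (fun j => Function.update (fun _ : Fin n => true) i false j = true))
          = Finset.univ.erase i := by
        ext j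
        by_cases h : j = i <;> simp [Function.update, h]
      rw [hfilt]
      rw [Finset.card_erase_of_mem (Finset.mem_univ i), Finset.card_univ,
        Fintype.card_fin]
      by_cases hn1 : n - 1 = 0
      · rw [if_pos hn1]
        linarith
      · rw [if_neg hn1]
        linarith
  · intro i
    linarith
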